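/- Let $n \geq 3$, $1 \leq k < n/2$, and write points of $\mathbb{R}^n$ as $(x,y)$ with $x \in \mathbb{R}^{n-k}$, $y \in \mathbb{R}^k$. Then for any constant $C > 0$ there exists $\rho > 0$ such that the function $w(x,y) = C|x|^{2-2k/n}(1+|y|^2)$ is convex on the slab $\{(x,y) : |y| < \rho\}$. -/

import Mathlib

/-!
Write `α = 2 - 2k/n`, so `1 < α` because `2k < n`, and `w(x, y) = C F(|x|, |y|)` with
`F(s, r) = s ^ α (1 + r ^ 2)`. For `s > 0` the Hessian of `F` has positive `ss`-entry and
determinant `2α s ^ (2α - 2) ((α - 1) - (α + 1) r ^ 2)`, so `F` is convex on the half-strip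
`s ≥ 0, r ^ 2 ≤ (α - 1)/(α + 1)` (checked along segments). There `F` is nondecreasing in `s`
and in `r ≥ 0`, and composing it with the convex maps `|x|`, `|y|` keeps it convex.
-/

open Set

theorem convexOn_of_forall_convexOn_Icc_line {𝕜 E β : Type*} [Field 𝕜] [LinearOrder 𝕜]
    [IsStrictOrderedRing 𝕜] [AddCommGroup E] [Module 𝕜 E] [AddCommMonoid β] [PartialOrder β]
    [SMul 𝕜 β] {s : Set E} {f : E → β} (hs : Convex 𝕜 s)
    (h : ∀ x ∈ s, ∀ y ∈ s, ConvexOn 𝕜 (Icc 0 1) fun t : 𝕜 => f (x + t • (y - x))) :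
    ConvexOn 𝕜 s f := by
  refine ⟨hs, fun x hx y hy a b ha hb hab => ?_⟩
  have hline :=
    (h x hx y hy).2 (left_mem_Icc.2 zero_le_one) (right_mem_Icc.2 zero_le_one) ha hb hab
  have hpoint : a • x + b • y = x + b • (y - x) := by
    rw [eq_sub_of_add_eq hab, sub_smul, one_smul, smul_sub]
    abel
  simpa [hpoint] using hline

theorem ConvexOn.comp_of_mapsTo {𝕜 E β γ : Type*} [Semiring 𝕜] [PartialOrder 𝕜]
    [AddCommMonoid E] [AddCommMonoid β] [PartialOrder β] [AddCommMonoid γ] [PartialOrder γ]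
    [SMul 𝕜 E] [SMul 𝕜 β] [SMul 𝕜 γ] {s : Set E} {t : Set β} {f : E → β} {g : β → γ}
    (hg : ConvexOn 𝕜 t g) (hf : ConvexOn 𝕜 s f) (hg' : MonotoneOn g t) (hst : MapsTo f s t) :
    ConvexOn 𝕜 s (g ∘ f) :=
  ⟨hf.1, fun _ hx _ hy _ _ ha hb hab =>
    (hg' (hst (hf.1 hx hy ha hb hab)) (hg.1 (hst hx) (hst hy) ha hb hab)
      (hf.2 hx hy ha hb hab)).trans (hg.2 (hst hx) (hst hy) ha hb hab)⟩

theorem rpow_mul_one_add_sq_hessian_nonneg {α r u w : ℝ} (hα : 1 ≤ α)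
    (hr : (α + 1) * r ^ 2 ≤ α - 1) :
    0 ≤ α * (α - 1) * (1 + r ^ 2) * u ^ 2 + 4 * α * r * u * w + 2 * w ^ 2 := by
  nlinarith [sq_nonneg (2 * w + 2 * α * r * u),
    mul_nonneg (mul_nonneg (by linarith : (0:ℝ) ≤ α) (sub_nonneg.2 hr)) (sq_nonneg u)]

theorem convexOn_affine_rpow_mul_one_add_sq {D : Set ℝ} (hD : Convex ℝ D) {α a u b v : ℝ}
    (hα : 1 ≤ α) (hS : ∀ t ∈ interior D, 0 < a + t * u)
    (hR : ∀ t ∈ interior D, (α + 1) * (b + t * v) ^ 2 ≤ α - 1) :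
    ConvexOn ℝ D fun t => (a + t * u) ^ α * (1 + (b + t * v) ^ 2) := by
  have hpow : ∀ β t, 0 < a + t * u →
      HasDerivAt (fun t => (a + t * u) ^ β) (β * u * (a + t * u) ^ (β - 1)) t := by
    intro β t ht
    have := (((hasDerivAt_id t).mul_const u).const_add a).rpow_const (p := β) (Or.inl ht.ne')
    exact this.congr_deriv (by simp only [id]; ring)
  have hL : ∀ t, HasDerivAt (fun t => b + t * v) v t := fun t => by
    simpa using ((hasDerivAt_id t).mul_const v).const_add b
  have hR' : ∀ t, HasDerivAt (fun t => 1 + (b + t * v) ^ 2) (2 * v * (b + t * v)) t := fun t =>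
    (((hL t).pow 2).const_add 1).congr_deriv (by ring)
  refine convexOn_of_hasDerivWithinAt2_nonneg hD (by fun_prop (disch := linarith))
    (f' := fun t => α * u * (a + t * u) ^ (α - 1) * (1 + (b + t * v) ^ 2)
      + (a + t * u) ^ α * (2 * v * (b + t * v)))
    -- `(a + t u) ^ (α - 2)` times the Hessian form of `s ^ α * (1 + r ^ 2)` at `(u, v s)`
    (f'' := fun t => (a + t * u) ^ (α - 2) * (α * (α - 1) * (1 + (b + t * v) ^ 2) * u ^ 2
      + 4 * α * (b + t * v) * u * (v * (a + t * u)) + 2 * (v * (a + t * u)) ^ 2))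
    (fun t ht => ((hpow α t (hS t ht)).mul (hR' t)).hasDerivWithinAt)
    (fun t ht => ?_) (fun t ht => mul_nonneg (Real.rpow_nonneg (hS t ht).le _)
      (rpow_mul_one_add_sq_hessian_nonneg hα (hR t ht)))
  have hs := hS t ht
  have h1 := (((hpow (α - 1) t hs).const_mul (α * u)).mul (hR' t)).add
    ((hpow α t hs).mul ((hL t).const_mul (2 * v)))
  refine (h1.congr_deriv ?_).hasDerivWithinAt
  have e1 : (a + t * u) ^ (α - 1) = (a + t * u) ^ (α - 2) * (a + t * u) := by
    rw [← Real.rpow_add_one hs.ne']; ring_nf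
  have e2 : (a + t * u) ^ α = (a + t * u) ^ (α - 2) * (a + t * u) ^ 2 := by
    rw [← Real.rpow_add_natCast hs.ne']; push_cast; ring_nf
  rw [show α - 1 - 1 = α - 2 by ring, e1, e2]
  ring

theorem convexOn_rpow_mul_one_add_sq {α : ℝ} (hα : 1 ≤ α) :
    ConvexOn ℝ (Ici 0 ×ˢ Icc (-√((α - 1) / (α + 1))) √((α - 1) / (α + 1)))
      fun q : ℝ × ℝ => q.1 ^ α * (1 + q.2 ^ 2) := by
  set ρ := √((α - 1) / (α + 1))
  have hD : Convex ℝ (Ici (0 : ℝ) ×ˢ Icc (-ρ) ρ) := (convex_Ici 0).prod (convex_Icc _ _)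
  refine convexOn_of_forall_convexOn_Icc_line hD fun p hp q hq => ?_
  have hline : ∀ t ∈ Icc (0 : ℝ) 1, p.2 + t * (q.2 - p.2) ∈ Icc (-ρ) ρ := fun t ht =>
    (hD.add_smul_sub_mem hp hq ht).2
  simp only [Prod.fst_add, Prod.snd_add, Prod.smul_fst, Prod.smul_snd, Prod.fst_sub,
    Prod.snd_sub, smul_eq_mul]
  by_cases hzero : p.1 = 0 ∧ q.1 = 0
  · refine (convexOn_const 0 (convex_Icc 0 1)).congr fun t _ => ?_
    simp [hzero.1, hzero.2, Real.zero_rpow (by linarith : α ≠ 0)]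
  refine convexOn_affine_rpow_mul_one_add_sq (convex_Icc 0 1) hα (fun t ht => ?_) fun t ht => ?_
  all_goals rw [interior_Icc] at ht
  · have hp1 : (0 : ℝ) ≤ p.1 := hp.1
    have hq1 : (0 : ℝ) ≤ q.1 := hq.1
    rcases not_and_or.1 hzero with h | h
    · nlinarith [mul_pos (sub_pos.2 ht.2) (lt_of_le_of_ne hp1 (Ne.symm h)), mul_nonneg ht.1.le hq1]
    · nlinarith [mul_pos ht.1 (lt_of_le_of_ne hq1 (Ne.symm h)), mul_nonneg (sub_pos.2 ht.2).le hp1]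
  · obtain ⟨hlo, hhi⟩ := hline t (Ioo_subset_Icc_self ht)
    have hρ : (α + 1) * ρ ^ 2 = α - 1 := by
      rw [Real.sq_sqrt (div_nonneg (by linarith) (by linarith))]
      field_simp
    nlinarith [sq_le_sq' hlo hhi]

theorem monotoneOn_rpow_mul_one_add_sq {α : ℝ} (hα : 0 ≤ α) :
    MonotoneOn (fun q : ℝ × ℝ => q.1 ^ α * (1 + q.2 ^ 2)) (Ici 0 ×ˢ Ici 0) :=
  fun p hp _ _ hpq => mul_le_mul (Real.rpow_le_rpow hp.1 hpq.1 hα)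
    (add_le_add_right (pow_le_pow_left₀ hp.2 hpq.2 2) 1) (by positivity)
    (Real.rpow_nonneg (hp.1.trans hpq.1) α)

section NormedSpaces

variable {E F : Type*} [SeminormedAddCommGroup E] [NormedSpace ℝ E]
  [SeminormedAddCommGroup F] [NormedSpace ℝ F]

theorem convexOn_norm_prodMap {s : Set (E × F)} (hs : Convex ℝ s) :
    ConvexOn ℝ s fun p => (‖p.1‖, ‖p.2‖) :=
  ⟨hs, fun _ _ _ _ _ _ ha hb hab => Prod.mk_le_mk.2
    ⟨(convexOn_norm convex_univ).2 trivial trivial ha hb hab,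
      (convexOn_norm convex_univ).2 trivial trivial ha hb hab⟩⟩

theorem convexOn_norm_rpow_mul_one_add_sq {α : ℝ} (hα : 1 ≤ α) :
    ConvexOn ℝ {p : E × F | ‖p.2‖ < √((α - 1) / (α + 1))}
      fun p => ‖p.1‖ ^ α * (1 + ‖p.2‖ ^ 2) := by
  set ρ := √((α - 1) / (α + 1))
  have hslab : Convex ℝ {p : E × F | ‖p.2‖ < ρ} := by
    simpa [preimage] using (convex_ball (0 : F) ρ).linear_preimage (LinearMap.snd ℝ E F)
  have hF := (convexOn_rpow_mul_one_add_sq hα).subset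
    (prod_mono subset_rfl (Icc_subset_Icc (neg_nonpos.2 (Real.sqrt_nonneg _)) le_rfl))
    ((convex_Ici 0).prod (convex_Icc 0 ρ))
  have hmono := (monotoneOn_rpow_mul_one_add_sq (zero_le_one.trans hα)).mono
    (prod_mono subset_rfl (Icc_subset_Ici_self : Icc 0 ρ ⊆ Ici 0))
  exact hF.comp_of_mapsTo (convexOn_norm_prodMap hslab) hmono
    fun p hp => ⟨norm_nonneg _, norm_nonneg _, hp.le⟩

end NormedSpaces

theorem pogorelov_barrier_convex_general (n k : ℕ) (hkn : 2 * k < n)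
    (C : ℝ) (hC : 0 < C) :
    ∃ ρ : ℝ, 0 < ρ ∧
      ConvexOn ℝ
        {p : EuclideanSpace ℝ (Fin (n - k)) × EuclideanSpace ℝ (Fin k) | ‖p.2‖ < ρ}
        (fun p => C * ‖p.1‖ ^ ((2:ℝ) - 2 * k / n) * (1 + ‖p.2‖ ^ 2)) := by
  set α : ℝ := 2 - 2 * k / n
  have hα : 1 < α := by
    have hn : (0 : ℝ) < n := by exact_mod_cast (Nat.zero_le _).trans_lt hkn
    have : 2 * (k : ℝ) / n < 1 := (div_lt_one hn).2 (by exact_mod_cast hkn)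
    linarith
  refine ⟨√((α - 1) / (α + 1)), Real.sqrt_pos.2 (div_pos (by linarith) (by linarith)), ?_⟩
  exact ((convexOn_norm_rpow_mul_one_add_sq hα.le).smul hC.le).congr fun p _ => by
    simp [mul_assoc]

/-- Pogorelov-type barrier: for `n ≥ 3`, `1 ≤ k < n/2`, and any `C > 0`, there is `ρ > 0`
such that `w(x,y) = C |x|^{2 - 2k/n} (1 + |y|^2)` is convex on the slab `{|y| < ρ}`. -/
theorem pogorelov_barrier_convex (n k : ℕ) (hn : 3 ≤ n) (hk : 1 ≤ k) (hkn : 2 * k < n)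
    (C : ℝ) (hC : 0 < C) :
    ∃ ρ : ℝ, 0 < ρ ∧
      ConvexOn ℝ
        {p : EuclideanSpace ℝ (Fin (n - k)) × EuclideanSpace ℝ (Fin k) | ‖p.2‖ < ρ}
        (fun p => C * ‖p.1‖ ^ ((2:ℝ) - 2 * k / n) * (1 + ‖p.2‖ ^ 2)) :=
  pogorelov_barrier_convex_general n k hkn C hC
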